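/- As formal power series in q, the generating function for the number a_d(n) of partitions of n into distinct parts with odd minimal excludant satisfies Σ_{n≥0} a_d(n) q^n = (−q; q)_∞ · Σ_{n≥0} (−1)^n q^{n(n+1)/2} / (−q; q)_n. -/

import Mathlib

open PowerSeries Finset

/-- The set of partitions of `n` into distinct parts, encoded as finsets of
positive integers summing to `n`. -/
def Dpart (n : ℕ) : Finset (Finset ℕ) :=
  (Finset.Icc 1 n).powerset.filter (fun S => S.sum id = n)

/-- The minimal excludant: the least positive integer not occurring as a part. -/
noncomputable def pmex (S : Finset ℕ) : ℕ := sInf {m : ℕ | 0 < m ∧ m ∉ S}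

/-- `a_d(n)`: the number of distinct-parts partitions of `n` with odd minimal excludant. -/
noncomputable def adist (n : ℕ) : ℕ := ((Dpart n).filter (fun S => Odd (pmex S))).card

/-- `(−q;q)_∞ = Π_{k ≥ 1} (1 + q^k)` as a formal power series over `ℚ`. -/
noncomputable def prodDistinct : PowerSeries ℚ :=
  PowerSeries.mk fun n =>
    coeff n (∏ k ∈ Finset.range (n + 1), (1 + (X : PowerSeries ℚ) ^ (k + 1)))

/-- `Σ_{n ≥ 0} (−1)^n q^{n(n+1)/2} / (−q;q)_n` as a formal power series over `ℚ`. -/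
noncomputable def falseTheta : PowerSeries ℚ :=
  PowerSeries.mk fun N =>
    coeff N (∑ n ∈ Finset.range (N + 2),
      ((-1 : PowerSeries ℚ)) ^ n * (X : PowerSeries ℚ) ^ (n * (n + 1) / 2) *
        (∏ k ∈ Finset.range n, (1 + (X : PowerSeries ℚ) ^ (k + 1)))⁻¹)

/-!
A distinct-parts partition with mex `2j+1` is `{1, …, 2j}` together with a set of parts larger
than `2j+1`, so these partitions are generated by `q^{j(2j+1)} ∏_{i > 2j+1} (1 + q^i)`.
On the other side, `(−q;q)_∞` times the terms `n = 2j` and `n = 2j+1` of the sum is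
`q^{j(2j+1)} ∏_{i > 2j} (1 + q^i) − q^{j(2j+1) + 2j+1} ∏_{i > 2j+1} (1 + q^i)`, the same series.
Everything is compared coefficientwise through the finite products `∏_{i ≤ M} (1 + q^i)`, which
agree with `(−q;q)_∞` in degrees `≤ M`.
-/

section PowerSeries

variable {R : Type*} [CommSemiring R]

lemma prod_range_one_add_X_pow_succ (n : ℕ) :
    ∏ k ∈ range n, (1 + (X : R⟦X⟧) ^ (k + 1)) = ∏ i ∈ Ioc 0 n, (1 + X ^ i) := by
  induction n with
  | zero => simp
  | succ n ih => rw [prod_range_succ, ih, prod_Ioc_succ_top n.zero_le]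

lemma prod_one_add_X_pow_eq_sum_powerset (s : Finset ℕ) :
    ∏ i ∈ s, (1 + (X : R⟦X⟧) ^ i) = ∑ t ∈ s.powerset, X ^ (∑ i ∈ t, i) := by
  rw [prod_one_add]
  exact sum_congr rfl fun t _ => prod_pow_eq_pow_sum t (fun i => i) X

lemma coeff_X_pow_mul_prod_one_add_X_pow (s : Finset ℕ) (T N : ℕ) :
    coeff N (X ^ T * ∏ i ∈ s, (1 + (X : R⟦X⟧) ^ i)) =
      (#{t ∈ s.powerset | T + ∑ i ∈ t, i = N} : R) := by
  simp only [prod_one_add_X_pow_eq_sum_powerset, mul_sum, ← pow_add, map_sum, coeff_X_pow,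
    sum_boole, eq_comm (a := N)]

lemma coeff_mul_one_add_X_pow_of_lt (f : R⟦X⟧) {N k : ℕ} (h : N < k) :
    coeff N (f * (1 + X ^ k)) = coeff N f := by
  rw [mul_add, mul_one, map_add, coeff_mul_X_pow', if_neg h.not_ge, add_zero]

lemma coeff_prod_Ioc_one_add_X_pow_of_le {a N M : ℕ} (hN : N ≤ M) :
    coeff N (∏ i ∈ Ioc a M, (1 + (X : R⟦X⟧) ^ i)) = coeff N (∏ i ∈ Ioc a N, (1 + X ^ i)) := by
  induction M, hN using Nat.le_induction with
  | base => rfl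
  | succ M hNM ih =>
    rcases le_or_gt a M with haM | hMa
    · rw [prod_Ioc_succ_top haM, coeff_mul_one_add_X_pow_of_lt _ (by omega), ih]
    · rw [← ih, Ioc_eq_empty_of_le hMa.le, Ioc_eq_empty_of_le hMa]

lemma coeff_sum_range_of_coeff_eq_zero {f : ℕ → R⟦X⟧} {N M : ℕ}
    (hf : ∀ n, N < n → coeff N (f n) = 0) (hM : N < M) :
    coeff N (∑ n ∈ range M, f n) = coeff N (∑ n ∈ range (N + 1), f n) := by
  rw [map_sum, map_sum]
  refine (sum_subset (range_subset_range.2 hM) fun n _ hn => hf n ?_).symm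
  simpa using hn

lemma coeff_mul_congr {f g f' g' : R⟦X⟧} {N : ℕ} (hf : ∀ i ≤ N, coeff i f = coeff i f')
    (hg : ∀ i ≤ N, coeff i g = coeff i g') : coeff N (f * g) = coeff N (f' * g') := by
  simp only [coeff_mul]
  refine sum_congr rfl fun p hp => ?_
  rw [HasAntidiagonal.mem_antidiagonal] at hp
  rw [hf p.1 (by omega), hg p.2 (by omega)]

end PowerSeries

lemma sum_Ioc_zero_id (m : ℕ) : ∑ i ∈ Ioc 0 m, i = m * (m + 1) / 2 := by
  have h : (∑ i ∈ Ioc 0 m, i) * 2 = m * (m + 1) := by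
    induction m with
    | zero => rfl
    | succ m ih => rw [sum_Ioc_succ_top m.zero_le, add_mul, ih]; ring
  omega

lemma sum_range_two_mul {M : Type*} [AddCommMonoid M] (f : ℕ → M) (L : ℕ) :
    ∑ n ∈ range (2 * L), f n = ∑ j ∈ range L, (f (2 * j) + f (2 * j + 1)) := by
  induction L with
  | zero => simp
  | succ L ih =>
    rw [mul_add, mul_one, sum_range_succ, sum_range_succ, sum_range_succ, ih, add_assoc]

section FalseTheta

variable {k : Type*} [Field k]

lemma prod_Ioc_mul_inv_prod_Ioc {n M : ℕ} (h : n ≤ M) :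
    (∏ i ∈ Ioc 0 M, (1 + (X : k⟦X⟧) ^ i)) * (∏ i ∈ Ioc 0 n, (1 + X ^ i))⁻¹ =
      ∏ i ∈ Ioc n M, (1 + X ^ i) := by
  have hunit : constantCoeff (∏ i ∈ Ioc 0 n, (1 + (X : k⟦X⟧) ^ i)) ≠ 0 := by
    rw [map_prod, prod_eq_one fun i hi => by simp [(mem_Ioc.1 hi).1.ne']]
    exact one_ne_zero
  rw [← prod_Ioc_consecutive _ n.zero_le h, mul_right_comm, PowerSeries.mul_inv_cancel _ hunit,
    one_mul]

variable (k) in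
/-- The `n`-th term of `falseTheta`, with `n(n+1)/2` written as `∑_{0<i≤n} i` so that the
exponents of consecutive terms differ by `n + 1`. -/
noncomputable def falseThetaTerm (n : ℕ) : k⟦X⟧ :=
  (-1) ^ n * X ^ (∑ i ∈ Ioc 0 n, i) * (∏ i ∈ Ioc 0 n, (1 + X ^ i))⁻¹

lemma prod_Ioc_mul_falseThetaTerm {n M : ℕ} (h : n ≤ M) :
    (∏ i ∈ Ioc 0 M, (1 + X ^ i)) * falseThetaTerm k n =
      (-1) ^ n * X ^ (∑ i ∈ Ioc 0 n, i) * ∏ i ∈ Ioc n M, (1 + X ^ i) := by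
  rw [falseThetaTerm, mul_left_comm, mul_assoc, prod_Ioc_mul_inv_prod_Ioc h, mul_assoc]

lemma prod_Ioc_mul_falseThetaTerm_pair {j M : ℕ} (h : 2 * j + 1 ≤ M) :
    (∏ i ∈ Ioc 0 M, (1 + X ^ i)) * (falseThetaTerm k (2 * j) + falseThetaTerm k (2 * j + 1)) =
      X ^ (∑ i ∈ Ioc 0 (2 * j), i) * ∏ i ∈ Ioc (2 * j + 1) M, (1 + X ^ i) := by
  rw [mul_add, prod_Ioc_mul_falseThetaTerm (by omega), prod_Ioc_mul_falseThetaTerm h,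
    sum_Ioc_succ_top (Nat.zero_le _), ← prod_Ioc_consecutive _ (2 * j).le_succ h,
    Nat.Ioc_succ_singleton, prod_singleton, Even.neg_one_pow (even_two_mul j),
    Odd.neg_one_pow (odd_two_mul_add_one j)]
  ring

lemma prod_Ioc_mul_sum_falseThetaTerm (L : ℕ) :
    (∏ i ∈ Ioc 0 (2 * L), (1 + X ^ i)) * ∑ n ∈ range (2 * L), falseThetaTerm k n =
      ∑ j ∈ range L, X ^ (∑ i ∈ Ioc 0 (2 * j), i) * ∏ i ∈ Ioc (2 * j + 1) (2 * L), (1 + X ^ i) := by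
  rw [sum_range_two_mul, mul_sum]
  exact sum_congr rfl fun j hj =>
    prod_Ioc_mul_falseThetaTerm_pair (by rw [mem_range] at hj; omega)

lemma coeff_falseThetaTerm_of_lt {N n : ℕ} (h : N < n) : coeff N (falseThetaTerm k n) = 0 := by
  have hn : n ≤ ∑ i ∈ Ioc 0 n, i := single_le_sum (f := fun i => i) (fun _ _ => Nat.zero_le _)
    (right_mem_Ioc.2 (by omega : 0 < n))
  rw [falseThetaTerm, mul_right_comm, mul_comm, coeff_X_pow_mul', if_neg (by omega)]

end FalseTheta

lemma coeff_prodDistinct {N M : ℕ} (h : N ≤ M) :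
    coeff N prodDistinct = coeff N (∏ i ∈ Ioc 0 M, (1 + (X : ℚ⟦X⟧) ^ i)) := by
  rw [prodDistinct, coeff_mk, prod_range_one_add_X_pow_succ,
    coeff_prod_Ioc_one_add_X_pow_of_le h, coeff_prod_Ioc_one_add_X_pow_of_le N.le_succ]

lemma coeff_falseTheta {N M : ℕ} (h : N < M) :
    coeff N falseTheta = coeff N (∑ n ∈ range M, falseThetaTerm ℚ n) := by
  have hterm (n : ℕ) : (-1 : ℚ⟦X⟧) ^ n * X ^ (n * (n + 1) / 2) *
      (∏ k ∈ range n, (1 + X ^ (k + 1)))⁻¹ = falseThetaTerm ℚ n := by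
    rw [falseThetaTerm, sum_Ioc_zero_id, prod_range_one_add_X_pow_succ]
  have hvanish (n : ℕ) (hn : N < n) := coeff_falseThetaTerm_of_lt (k := ℚ) hn
  rw [falseTheta, coeff_mk]
  simp only [hterm]
  rw [coeff_sum_range_of_coeff_eq_zero hvanish (by omega : N < N + 2),
    coeff_sum_range_of_coeff_eq_zero hvanish h]

lemma mem_Dpart {n : ℕ} {S : Finset ℕ} : S ∈ Dpart n ↔ S ⊆ Icc 1 n ∧ ∑ i ∈ S, i = n := by
  rw [Dpart, mem_filter, mem_powerset]
  rfl

lemma pmex_le {S : Finset ℕ} {m : ℕ} (hm : 0 < m) (hS : m ∉ S) : pmex S ≤ m :=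
  Nat.sInf_le ⟨hm, hS⟩

lemma pmex_eq_succ_iff {S : Finset ℕ} {m : ℕ} : pmex S = m + 1 ↔ Ioc 0 m ⊆ S ∧ m + 1 ∉ S := by
  constructor
  · intro h
    have hne : {m : ℕ | 0 < m ∧ m ∉ S}.Nonempty := by
      rw [Set.nonempty_iff_ne_empty]
      intro hempty
      have : pmex S = 0 := Nat.sInf_eq_zero.2 (Or.inr hempty)
      omega
    refine ⟨fun i hi => ?_, h ▸ (Nat.sInf_mem hne).2⟩
    rw [mem_Ioc] at hi
    by_contra hiS
    exact Nat.notMem_of_lt_sInf (show i < pmex S by omega) ⟨hi.1, hiS⟩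
  · rintro ⟨hsub, hnot⟩
    refine le_antisymm (pmex_le m.succ_pos hnot) (le_csInf ⟨m + 1, m.succ_pos, hnot⟩ ?_)
    rintro i ⟨hi, hiS⟩
    by_contra! hlt
    exact hiS (hsub (mem_Ioc.2 ⟨hi, by omega⟩))

lemma card_pmex_eq_succ (m : ℕ) {N M : ℕ} (h : N ≤ M) :
    #{S ∈ Dpart N | pmex S = m + 1} =
      #{t ∈ (Ioc (m + 1) M).powerset | ∑ i ∈ Ioc 0 m, i + ∑ i ∈ t, i = N} := by
  have hdisj {t : Finset ℕ} (ht : t ⊆ Ioc (m + 1) M) : Disjoint (Ioc 0 m) t :=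
    (Ioc_disjoint_Ioc_of_le m.le_succ).mono_right ht
  refine card_nbij' (· \ Ioc 0 m) (Ioc 0 m ∪ ·) ?_ ?_ ?_ ?_
  · intro S hS
    simp only [coe_filter, Set.mem_ofPred_eq, mem_Dpart, pmex_eq_succ_iff, mem_powerset] at hS ⊢
    obtain ⟨⟨hSN, hsum⟩, hB, hm⟩ := hS
    refine ⟨fun x hx => ?_, by rw [add_comm, sum_sdiff hB, hsum]⟩
    obtain ⟨hxS, hxB⟩ := mem_sdiff.1 hx
    have hxN := mem_Icc.1 (hSN hxS)
    have hxm : x ≠ m + 1 := by rintro rfl; exact hm hxS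
    rw [mem_Ioc] at hxB ⊢
    omega
  · intro t ht
    simp only [coe_filter, Set.mem_ofPred_eq, mem_Dpart, pmex_eq_succ_iff, mem_powerset] at ht ⊢
    obtain ⟨htM, hsum⟩ := ht
    rw [sum_union (hdisj htM), hsum]
    refine ⟨⟨fun x hx => ?_, rfl⟩, subset_union_left, ?_⟩
    · have hxN : x ≤ N := by
        rw [← hsum, ← sum_union (hdisj htM)]
        exact single_le_sum (f := fun i => i) (fun _ _ => Nat.zero_le _) hx
      rcases mem_union.1 hx with hx | hx
      · rw [mem_Ioc] at hx; rw [mem_Icc]; omega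
      · have := mem_Ioc.1 (htM hx); rw [mem_Icc]; omega
    · rw [mem_union, not_or, mem_Ioc]
      exact ⟨by omega, fun hmt => by have := mem_Ioc.1 (htM hmt); omega⟩
  · intro S hS
    simp only [coe_filter, Set.mem_ofPred_eq, pmex_eq_succ_iff] at hS
    exact union_sdiff_of_subset hS.2.1
  · intro t ht
    simp only [coe_filter, Set.mem_ofPred_eq, mem_powerset] at ht
    exact union_sdiff_cancel_left (hdisj ht.1)

lemma adist_eq_sum_card_pmex {N L : ℕ} (h : N < 2 * L) :
    adist N = ∑ j ∈ range L, #{S ∈ Dpart N | pmex S = 2 * j + 1} := by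
  rw [adist, card_eq_sum_card_fiberwise (f := fun S => pmex S / 2) (t := range L)]
  · refine sum_congr rfl fun j _ => ?_
    rw [filter_filter]
    congr 1
    refine filter_congr fun S _ => ?_
    constructor
    · rintro ⟨⟨r, hr⟩, hj⟩
      omega
    · intro hS
      exact ⟨⟨j, hS⟩, by omega⟩
  · intro S hS
    rw [mem_coe, mem_filter, mem_Dpart] at hS
    have hle : pmex S ≤ N + 1 :=
      pmex_le N.succ_pos fun hN => by simpa using hS.1.1 hN
    obtain ⟨r, hr⟩ := hS.2
    rw [mem_coe, mem_range]
    dsimp only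
    omega

/-- `Σ_{n≥0} a_d(n) q^n = (−q;q)_∞ · Σ_{n≥0} (−1)^n q^{n(n+1)/2} / (−q;q)_n`. -/
theorem stmt_7 : (PowerSeries.mk fun n => (adist n : ℚ)) = prodDistinct * falseTheta := by
  ext N
  set M := 2 * (N + 1)
  have hN : N < M := by omega
  calc coeff N (mk fun n => (adist n : ℚ))
      = ∑ j ∈ range (N + 1), (#{S ∈ Dpart N | pmex S = 2 * j + 1} : ℚ) := by
        rw [coeff_mk, adist_eq_sum_card_pmex hN, Nat.cast_sum]
    _ = ∑ j ∈ range (N + 1), coeff N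
          (X ^ (∑ i ∈ Ioc 0 (2 * j), i) * ∏ i ∈ Ioc (2 * j + 1) M, (1 + (X : ℚ⟦X⟧) ^ i)) := by
        refine sum_congr rfl fun j _ => ?_
        rw [coeff_X_pow_mul_prod_one_add_X_pow, card_pmex_eq_succ (2 * j) hN.le]
    _ = coeff N ((∏ i ∈ Ioc 0 M, (1 + X ^ i)) * ∑ n ∈ range M, falseThetaTerm ℚ n) := by
        rw [prod_Ioc_mul_sum_falseThetaTerm, map_sum]
    _ = coeff N (prodDistinct * falseTheta) :=
        coeff_mul_congr (fun _ hi => (coeff_prodDistinct (by omega)).symm)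
          (fun _ hi => (coeff_falseTheta (by omega)).symm)
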